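/- Let a < b, c ≥ 0, and f : [a,b] → ℝ continuous and strongly η-convex with respect to η and modulus c. Then (1/(b−a)) ∫_a^b f(x) dx ≤ min( f(b) + (1/2)·η(f(a), f(b)), f(a) + (1/2)·η(f(b), f(a)) ) − (c/6)·(b−a)². -/

import Mathlib

/-!
Parametrize the segment from `y` to `x` by `t ↦ t * x + (1 - t) * y`. Integrating the defining
inequality of strong η-convexity over `t ∈ [0, 1]` bounds the mean value of `f` on the segment by
`f y + η (f x) (f y) / 2 - c (x - y)² / 6`, since `∫₀¹ t = 1/2` and `∫₀¹ t (1 - t) = 1/6`.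
Taking `(x, y) = (a, b)` and `(x, y) = (b, a)` gives the two bounds.
-/

open intervalIntegral Set

def StronglyEtaConvexOn (s : Set ℝ) (η : ℝ → ℝ → ℝ) (c : ℝ) (f : ℝ → ℝ) : Prop :=
  ∀ x ∈ s, ∀ y ∈ s, ∀ t ∈ Icc (0 : ℝ) 1,
    f (t * x + (1 - t) * y) ≤ f y + t * η (f x) (f y) - c * t * (1 - t) * (x - y) ^ 2

lemma convexComb_mem_Icc {a b x y t : ℝ} (hx : x ∈ Icc a b) (hy : y ∈ Icc a b)
    (ht : t ∈ Icc (0 : ℝ) 1) : t * x + (1 - t) * y ∈ Icc a b := by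
  simpa only [smul_eq_mul] using
    convex_Icc a b hx hy ht.1 (sub_nonneg.2 ht.2) (add_sub_cancel t 1)

lemma integral_unitInterval_comp_convexComb (f : ℝ → ℝ) {x y : ℝ} (hxy : x ≠ y) :
    ∫ t in (0 : ℝ)..1, f (t * x + (1 - t) * y) = (x - y)⁻¹ * ∫ u in y..x, f u := by
  have h := integral_comp_mul_add (a := 0) (b := 1) f (sub_ne_zero.2 hxy) y
  simp only [mul_zero, zero_add, mul_one, sub_add_cancel, smul_eq_mul] at h
  rw [← h]
  congr 1 with t
  congr 1
  ring

lemma integral_unitInterval_strongConvexityBound (p E c K : ℝ) :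
    ∫ t in (0 : ℝ)..1, (p + t * E - c * t * (1 - t) * K) = p + E / 2 - c / 6 * K := by
  have h : (fun t : ℝ => p + t * E - c * t * (1 - t) * K)
      = fun t => p + (E - c * K) * t + c * K * t ^ 2 := by
    funext t; ring
  rw [h, integral_add, integral_add, integral_const_mul, integral_const_mul, integral_pow,
    integral_id, integral_const]
  · norm_num; ring
  all_goals exact (by fun_prop : Continuous _).intervalIntegrable 0 1

lemma StronglyEtaConvexOn.mean_le {a b c : ℝ} {η : ℝ → ℝ → ℝ} {f : ℝ → ℝ}
    (hf : StronglyEtaConvexOn (Icc a b) η c f) (hcont : ContinuousOn f (Icc a b))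
    {x y : ℝ} (hx : x ∈ Icc a b) (hy : y ∈ Icc a b) (hxy : x ≠ y) :
    (x - y)⁻¹ * ∫ u in y..x, f u ≤ f y + η (f x) (f y) / 2 - c / 6 * (x - y) ^ 2 := by
  have hint : IntervalIntegrable (fun t : ℝ => f (t * x + (1 - t) * y)) MeasureTheory.volume 0 1 :=
    (hcont.comp (by fun_prop) fun _ ht => convexComb_mem_Icc hx hy ht).intervalIntegrable_of_Icc
      zero_le_one
  have hbound : IntervalIntegrable
      (fun t : ℝ => f y + t * η (f x) (f y) - c * t * (1 - t) * (x - y) ^ 2)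
      MeasureTheory.volume 0 1 :=
    (by fun_prop : Continuous _).intervalIntegrable 0 1
  rw [← integral_unitInterval_comp_convexComb f hxy,
    ← integral_unitInterval_strongConvexityBound]
  exact integral_mono_on zero_le_one hint hbound (hf x hx y hy)

theorem stmt_18_general (a b c : ℝ) (hab : a < b)
    (f : ℝ → ℝ) (η : ℝ → ℝ → ℝ)
    (hcont : ContinuousOn f (Set.Icc a b))
    (hf : ∀ x ∈ Set.Icc a b, ∀ y ∈ Set.Icc a b, ∀ t ∈ Set.Icc (0:ℝ) 1,
      f (t * x + (1 - t) * y) ≤ f y + t * η (f x) (f y) - c * t * (1 - t) * (x - y)^2) :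
    (1 / (b - a)) * ∫ x in a..b, f x ≤
      min (f b + (1 / 2) * η (f a) (f b)) (f a + (1 / 2) * η (f b) (f a))
        - (c / 6) * (b - a)^2 := by
  have ha : a ∈ Icc a b := left_mem_Icc.2 hab.le
  have hb : b ∈ Icc a b := right_mem_Icc.2 hab.le
  have hab' : (a - b)⁻¹ * ∫ u in b..a, f u = (b - a)⁻¹ * ∫ u in a..b, f u := by
    rw [integral_symm, ← neg_sub, inv_neg, neg_mul_neg]
  have h₁ := StronglyEtaConvexOn.mean_le hf hcont ha hb hab.ne
  have h₂ := StronglyEtaConvexOn.mean_le hf hcont hb ha hab.ne'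
  rw [hab', sub_sq_comm] at h₁
  rw [one_div, ← min_sub_sub_right]
  exact le_min (by linarith) (by linarith)

theorem stmt_18 (a b c : ℝ) (hab : a < b) (hc : 0 ≤ c)
    (f : ℝ → ℝ) (η : ℝ → ℝ → ℝ)
    (hcont : ContinuousOn f (Set.Icc a b))
    (hf : ∀ x ∈ Set.Icc a b, ∀ y ∈ Set.Icc a b, ∀ t ∈ Set.Icc (0:ℝ) 1,
      f (t * x + (1 - t) * y) ≤ f y + t * η (f x) (f y) - c * t * (1 - t) * (x - y)^2) :
    (1 / (b - a)) * ∫ x in a..b, f x ≤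
      min (f b + (1 / 2) * η (f a) (f b)) (f a + (1 / 2) * η (f b) (f a))
        - (c / 6) * (b - a)^2 :=
  stmt_18_general a b c hab f η hcont hf
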